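/- arXiv:math/0602493 — 6 statements merged into one kernel-verified Lean document; each statement's English description precedes it below -/
import Mathlib

section
/- An identity p ≈ q of type τ is satisfied in the derived algebra A_σ (where each fundamental operation f_i of A is replaced by the term operation t_i^A induced by σ(f_i)) if and only if the derived identity σ(p) ≈ σ(q) holds in A. -/
/-- Terms of type `τ : I → ℕ`, with variables indexed by `ℕ`. -/
inductive Term (I : Type) (τ : I → ℕ) : Type
  | var : ℕ → Term I τ
  | app : (i : I) → (Fin (τ i) → Term I τ) → Term I τ

/-- An algebra of type `τ`. -/
structure Alg (I : Type) (τ : I → ℕ) where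
  carrier : Type
  nonempty : Nonempty carrier
  op : (i : I) → (Fin (τ i) → carrier) → carrier

/-- Evaluation of a term in an algebra under an environment. -/
def Alg.eval {I : Type} {τ : I → ℕ} (A : Alg I τ) (env : ℕ → A.carrier) :
    Term I τ → A.carrier
  | .var n => env n
  | .app i args => A.op i (fun k => A.eval env (args k))

/-- Substitution of terms for variables. -/
def Term.subst {I : Type} {τ : I → ℕ} (s : ℕ → Term I τ) : Term I τ → Term I τ
  | .var n => s n
  | .app i args => .app i (fun k => (args k).subst s)

/-- The extension `σ̄` of a hypersubstitution `σ` to all terms. -/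
def hsub {I : Type} {τ : I → ℕ} (σ : (i : I) → Term I τ) : Term I τ → Term I τ
  | .var n => .var n
  | .app i args =>
      (σ i).subst (fun n => if h : n < τ i then hsub σ (args ⟨n, h⟩) else .var n)

/-- The derived algebra `A_σ`: each fundamental operation `f_i` is replaced by
the term operation induced by `σ(f_i)`. -/
noncomputable def derived {I : Type} {τ : I → ℕ} (A : Alg I τ) (σ : (i : I) → Term I τ) : Alg I τ where
  carrier := A.carrier
  nonempty := A.nonempty
  op := fun i args =>
    A.eval (fun n => if h : n < τ i then args ⟨n, h⟩ else Classical.choice A.nonempty) (σ i)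

/-- All variables occurring in a term are `< n`. -/
def varsLt {I : Type} {τ : I → ℕ} : Term I τ → ℕ → Prop
  | .var m, n => m < n
  | .app _ args, n => ∀ k, varsLt (args k) n

/-- An identity `p ≈ q` is satisfied in `A`. -/
def satisfies {I : Type} {τ : I → ℕ} (A : Alg I τ) (p q : Term I τ) : Prop :=
  ∀ env : ℕ → A.carrier, A.eval env p = A.eval env q


theorem eval_congr {I : Type} {τ : I → ℕ} (A : Alg I τ) {t : Term I τ} {n : ℕ}
    (h : varsLt t n) {e1 e2 : ℕ → A.carrier} (he : ∀ m < n, e1 m = e2 m) :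
    A.eval e1 t = A.eval e2 t := by
  induction t with
  | var m => exact he m h
  | app i args ih =>
    simp only [Alg.eval]
    exact congrArg _ (funext fun k => ih k (h k))

theorem eval_subst {I : Type} {τ : I → ℕ} (A : Alg I τ) (env : ℕ → A.carrier)
    (s : ℕ → Term I τ) (t : Term I τ) :
    A.eval env (t.subst s) = A.eval (fun n => A.eval env (s n)) t := by
  induction t with
  | var m => rfl
  | app i args ih =>
    simp only [Term.subst, Alg.eval]
    exact congrArg _ (funext fun k => ih k)

theorem eval_hsub {I : Type} {τ : I → ℕ} (σ : (i : I) → Term I τ)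
    (hσ : ∀ i, varsLt (σ i) (τ i)) (A : Alg I τ) (env : ℕ → A.carrier)
    (t : Term I τ) : A.eval env (hsub σ t) = (derived A σ).eval env t := by
  induction t with
  | var m => rfl
  | app i args ih =>
    simp only [hsub, Alg.eval, derived, eval_subst]
    refine eval_congr A (hσ i) (fun m hm => ?_)
    simp only [hm, dif_pos, ih]; rfl

/-- Conjugate property: `p ≈ q` holds in the derived algebra `A_σ` iff the
derived identity `σ̄(p) ≈ σ̄(q)` holds in `A`. -/
theorem conjugate_property {I : Type} {τ : I → ℕ} (σ : (i : I) → Term I τ)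
    (hσ : ∀ i, varsLt (σ i) (τ i)) (A : Alg I τ) (p q : Term I τ) :
    satisfies (derived A σ) p q ↔ satisfies A (hsub σ p) (hsub σ q) := by
  constructor
  · intro h env
    rw [eval_hsub σ hσ A env p, eval_hsub σ hσ A env q]; exact h env
  · intro h env
    rw [← eval_hsub σ hσ A env p, ← eval_hsub σ hσ A env q]; exact h env
end

section
/- If for every n there are only finitely many V-equivalence classes of n-ary terms (where V is a variety of finite type), then V has only finitely many distinct derived varieties V_σ, so the dimension of V (the number of proper derived varieties of V contained in V) is finite. -/
def IsVariety {I : Type} {τ : I → ℕ} (V : Set (Alg I τ)) : Prop :=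
  ∃ E : Set (Term I τ × Term I τ), V = {A | ∀ e ∈ E, satisfies A e.1 e.2}

def derivedVariety {I : Type} {τ : I → ℕ} (V : Set (Alg I τ))
    (σ : (i : I) → Term I τ) : Set (Alg I τ) :=
  {B | ∀ p q : Term I τ, (∀ A ∈ V, satisfies (derived A σ) p q) → satisfies B p q}

/-- If a variety `V` of finite type has, for every `n`, only finitely many
`V`-equivalence classes of `n`-ary terms, then the set of proper derived
varieties of `V` contained in `V` is finite, i.e. `dim V` is finite. -/
theorem dim_finite {I : Type} [Fintype I] {τ : I → ℕ} (V : Set (Alg I τ))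
    (hV : IsVariety V)
    (hfin : ∀ n : ℕ, ∃ S : Set (Term I τ), S.Finite ∧
      ∀ t : Term I τ, varsLt t n → ∃ s ∈ S, ∀ A ∈ V, satisfies A t s) :
    ({W : Set (Alg I τ) | ∃ σ : (i : I) → Term I τ,
        (∀ i, varsLt (σ i) (τ i)) ∧ W = derivedVariety V σ ∧ W ≠ V ∧ W ⊆ V}).Finite := by
  classical
  choose S hSfin hS using hfin
  have key : ∀ σ σ' : (i : I) → Term I τ,
      (∀ i, ∀ A ∈ V, satisfies A (σ i) (σ' i)) →
      derivedVariety V σ = derivedVariety V σ' := by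
    intro σ σ' h
    have hder : ∀ A ∈ V, derived A σ = derived A σ' := by
      intro A hA
      unfold derived
      exact congrArg (Alg.mk A.carrier A.nonempty)
        (funext fun i => funext fun args => h i A hA _)
    unfold derivedVariety
    ext B
    constructor <;> intro hB p q hpq <;> apply hB p q <;> intro A hA
    · rw [hder A hA]; exact hpq A hA
    · rw [← hder A hA]; exact hpq A hA
  apply Set.Finite.subset
    (Set.Finite.image (derivedVariety V) (Set.Finite.pi (fun i => hSfin (τ i))))
  rintro W ⟨σ, hσlt, rfl, -, -⟩
  refine ⟨fun i => (hS (τ i) (σ i) (hσlt i)).choose, fun i _ =>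
    (hS (τ i) (σ i) (hσlt i)).choose_spec.1, ?_⟩
  exact (key σ _ fun i => (hS (τ i) (σ i) (hσlt i)).choose_spec.2).symm
end

section
/- Let L be a lattice with at least two elements and let σ be a hypersubstitution of type (2,2) such that the derived algebra L_σ = (L, σ(∨)^L, σ(∧)^L) is again a lattice. Then either L_σ = L (σ acts as the identity on L) or L_σ is the dual lattice L^d (σ swaps join and meet on L). -/
inductive LatTerm : Type
  | x | y
  | join (s t : LatTerm)
  | meet (s t : LatTerm)

def LatTerm.eval {L : Type} [Lattice L] (a b : L) : LatTerm → L
  | .x => a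
  | .y => b
  | .join s t => s.eval a b ⊔ t.eval a b
  | .meet s t => s.eval a b ⊓ t.eval a b

/-- A pair of binary operations satisfies the lattice axioms: commutativity,
associativity, idempotency and the two absorption laws. -/
def IsLatticeOps {L : Type} (f g : L → L → L) : Prop :=
  (∀ a b, f a b = f b a) ∧ (∀ a b, g a b = g b a) ∧
  (∀ a b c, f (f a b) c = f a (f b c)) ∧ (∀ a b c, g (g a b) c = g a (g b c)) ∧
  (∀ a, f a a = a) ∧ (∀ a, g a a = a) ∧
  (∀ a b, f a (g a b) = a) ∧ (∀ a b, g a (f a b) = a)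

/-- The free lattice on two generators has four elements: every binary
lattice term is equivalent to `x`, `y`, `x ⊔ y` or `x ⊓ y`. -/
lemma latTerm_classify {L : Type} [Lattice L] (t : LatTerm) :
    (∀ a b : L, t.eval a b = a) ∨ (∀ a b : L, t.eval a b = b) ∨
    (∀ a b : L, t.eval a b = a ⊔ b) ∨ (∀ a b : L, t.eval a b = a ⊓ b) := by
  induction t with
  | x => exact Or.inl fun a b => rfl
  | y => exact Or.inr (Or.inl fun a b => rfl)
  | join s t ihs iht =>
      rcases ihs with h|h|h|h <;> rcases iht with g|g|g|g <;>
        simp only [LatTerm.eval, h, g] <;>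
        simp [sup_comm, sup_assoc, sup_left_comm, sup_idem, sup_left_idem,
          sup_inf_self, inf_sup_self, sup_eq_left.mpr inf_le_sup,
          sup_eq_right.mpr inf_le_sup]
  | meet s t ihs iht =>
      rcases ihs with h|h|h|h <;> rcases iht with g|g|g|g <;>
        simp only [LatTerm.eval, h, g] <;>
        simp [inf_comm, inf_assoc, inf_left_comm, inf_idem, inf_left_idem,
          inf_sup_self, sup_inf_self, inf_eq_left.mpr inf_le_sup,
          inf_eq_right.mpr inf_le_sup]

/-- If the derived algebra `L_σ` of a lattice `L` with at least two elements
is again a lattice, then `L_σ = L` or `L_σ` is the dual lattice `L^d`. -/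
theorem derived_lattice_self_or_dual (L : Type) [Lattice L]
    (h2 : ∃ a b : L, a ≠ b) (tj tm : LatTerm)
    (hlat : IsLatticeOps (fun a b : L => tj.eval a b) (fun a b : L => tm.eval a b)) :
    ((∀ a b : L, tj.eval a b = a ⊔ b) ∧ (∀ a b : L, tm.eval a b = a ⊓ b)) ∨
      ((∀ a b : L, tj.eval a b = a ⊓ b) ∧ (∀ a b : L, tm.eval a b = a ⊔ b)) := by
  obtain ⟨a, b, hab⟩ := h2
  obtain ⟨cf, cg, _, _, _, _, absf, absg⟩ := hlat
  rcases latTerm_classify (L := L) tj with hj|hj|hj|hj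
  · exact absurd ((hj a b).symm.trans ((cf a b).trans (hj b a))) hab
  · exact absurd ((hj b a).symm.trans ((cf b a).trans (hj a b))) hab
  · rcases latTerm_classify (L := L) tm with hm|hm|hm|hm
    · exact absurd ((hm a b).symm.trans ((cg a b).trans (hm b a))) hab
    · exact absurd ((hm b a).symm.trans ((cg b a).trans (hm a b))) hab
    · -- both operations are `⊔`: absorption fails
      exfalso
      have e : ∀ x y : L, x ⊔ y = x := by
        intro x y
        have := absf x y
        simpa [hj, hm, sup_left_idem] using this
      have h1 := e a b
      have h2 := e b a
      rw [sup_comm] at h2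
      exact hab (h1.symm.trans h2)
    · exact Or.inl ⟨hj, hm⟩
  · rcases latTerm_classify (L := L) tm with hm|hm|hm|hm
    · exact absurd ((hm a b).symm.trans ((cg a b).trans (hm b a))) hab
    · exact absurd ((hm b a).symm.trans ((cg b a).trans (hm a b))) hab
    · exact Or.inr ⟨hj, hm⟩
    · -- both operations are `⊓`: absorption fails
      exfalso
      have e : ∀ x y : L, x ⊓ y = x := by
        intro x y
        have := absf x y
        simpa [hj, hm, inf_left_idem] using this
      have h1 := e a b
      have h2 := e b a
      rw [inf_comm] at h2
      exact hab (h1.symm.trans h2)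
end

section
/- There exists a band satisfying z·x·y = z·x·z·y in which the identity z·x·y·x·z = z·y·x·y·z fails. -/
private def lm (a b : List (Fin 3)) : List (Fin 3) :=
  a ++ b.filter (fun x => decide (x ∉ a))

private theorem lm_assoc (a b c : List (Fin 3)) : lm (lm a b) c = lm a (lm b c) := by
  simp only [lm, List.filter_append, List.append_assoc, List.filter_filter]
  congr 1
  congr 1
  apply List.filter_congr
  intro x _
  by_cases hxa : x ∈ a <;> by_cases hxb : x ∈ b <;> simp [hxa, hxb]

private theorem lm_idem (a : List (Fin 3)) : lm a a = a := by
  simp [lm, List.filter_eq_nil_iff]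

/-- There exists a band satisfying `z·x·y = z·x·z·y` in which the identity
`z·x·y·x·z = z·y·x·y·z` fails. -/
theorem exists_band_V5_not_sigma5_derived :
    ∃ (B : Type) (m : B → B → B),
      (∀ a b c : B, m (m a b) c = m a (m b c)) ∧
      (∀ a : B, m a a = a) ∧
      (∀ z x y : B, m (m z x) y = m (m (m z x) z) y) ∧
      ∃ x y z : B, m (m (m (m z x) y) x) z ≠ m (m (m (m z y) x) y) z := by
  refine ⟨List (Fin 3), lm, lm_assoc, lm_idem, ?_, [0], [1], [2], ?_⟩
  · intro z x y
    have h : lm (lm z x) z = lm z x := by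
      show lm z x ++ _ = lm z x
      rw [List.filter_eq_nil_iff.mpr ?_, List.append_nil]
      intro a ha
      simp only [decide_eq_true_eq, not_not, lm, List.mem_append]
      exact Or.inl ha
    rw [h]
  · decide
end

section
/- If B is a band satisfying z·x·y = z·x·z·y, then the derived algebra (B, ∘) with x ∘ y := x·y·x is a band satisfying y ∘ x = y ∘ x ∘ y; i.e., the σ₅-derived algebra of any member of V₅ lies in V₃. -/
/-- If `B` is a band satisfying `z·x·y = z·x·z·y`, then the derived algebra
with `x ∘ y := x·y·x` is a band satisfying `y ∘ x = (y ∘ x) ∘ y`; i.e. the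
`σ₅`-derived algebra of any member of `V₅` lies in `V₃`. -/
theorem sigma5_derived_of_V5_in_V3 (B : Type) [Semigroup B]
    (idem : ∀ x : B, x * x = x)
    (h5 : ∀ z x y : B, z * x * y = z * x * z * y) :
    (∀ a b c : B, (fun u v : B => u * v * u) ((fun u v : B => u * v * u) a b) c
        = (fun u v : B => u * v * u) a ((fun u v : B => u * v * u) b c)) ∧
      (∀ a : B, (fun u v : B => u * v * u) a a = a) ∧
      (∀ x y : B, (fun u v : B => u * v * u) y x
        = (fun u v : B => u * v * u) ((fun u v : B => u * v * u) y x) y) := by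
  have h5R : ∀ z x y : B, z * (x * (z * y)) = z * (x * y) := by
    intro z x y
    simpa [mul_assoc] using (h5 z x y).symm
  have h5R2 : ∀ z1 z2 x y : B,
      z1 * (z2 * (x * (z1 * (z2 * y)))) = z1 * (z2 * (x * y)) := by
    intro z1 z2 x y
    simpa [mul_assoc] using (h5 (z1 * z2) x y).symm
  have idemR : ∀ a t : B, a * (a * t) = a * t := by
    intro a t
    rw [← mul_assoc, idem]
  refine ⟨?_, ?_, ?_⟩
  · intro a b c
    simp only [mul_assoc]
    rw [h5R, h5R2, h5R]
  · intro a
    simp only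
    rw [idem, idem]
  · intro x y
    simp only [mul_assoc]
    rw [idemR, idemR, h5R, idemR]
end

section
/- If B is a normal band (satisfying z·x·y·z = z·y·x·z), then the derived algebra (B, ∘) with x ∘ y := x·y·x is a band satisfying z ∘ x ∘ y = z ∘ y ∘ x; i.e., the σ₅-derived algebra of any normal band lies in the variety V₁ defined by z·x·y ≈ z·y·x. -/
/-- If `B` is a normal band (`z·x·y·z = z·y·x·z`), then the derived algebra
with `x ∘ y := x·y·x` is a band satisfying `z ∘ x ∘ y = z ∘ y ∘ x`; i.e. the
`σ₅`-derived algebra of any normal band lies in `V₁`. -/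
theorem sigma5_derived_of_normal_in_V1 (B : Type) [Semigroup B]
    (idem : ∀ x : B, x * x = x)
    (normal : ∀ z x y : B, z * x * y * z = z * y * x * z) :
    (∀ a b c : B, (fun u v : B => u * v * u) ((fun u v : B => u * v * u) a b) c
        = (fun u v : B => u * v * u) a ((fun u v : B => u * v * u) b c)) ∧
      (∀ a : B, (fun u v : B => u * v * u) a a = a) ∧
      (∀ z x y : B, (fun u v : B => u * v * u) ((fun u v : B => u * v * u) z x) y
        = (fun u v : B => u * v * u) ((fun u v : B => u * v * u) z y) x) := by
  have idem' : ∀ x y : B, x * (x * y) = x * y := by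
    intro x y; rw [← mul_assoc, idem]
  refine ⟨?_, ?_, ?_⟩
  · intro a b c
    simp only []
    have lhs : a * b * a * c * (a * b * a) = a * (b * (c * a)) := by
      calc a * b * a * c * (a * b * a)
          = a * b * (a * c * a * b) * a := by simp [mul_assoc]
        _ = a * (a * c * a * b) * b * a := normal a b (a * c * a * b)
        _ = a * (c * a) * b * a := by simp [mul_assoc, idem, idem']
        _ = a * b * (c * a) * a := normal a (c * a) b
        _ = a * (b * (c * a)) := by simp [mul_assoc, idem, idem']
    have rhs : a * (b * c * b) * a = a * (b * (c * a)) := by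
      calc a * (b * c * b) * a
          = a * (b * c) * b * a := by simp [mul_assoc]
        _ = a * b * (b * c) * a := normal a (b * c) b
        _ = a * (b * (c * a)) := by simp [mul_assoc, idem, idem']
    rw [lhs, rhs]
  · intro a
    simp only []
    rw [idem, idem]
  · intro z x y
    simp only []
    have key : ∀ x y : B, z * x * z * y * (z * x * z) = z * (x * (y * z)) := by
      intro x y
      calc z * x * z * y * (z * x * z)
          = z * x * (z * y * z * x) * z := by simp [mul_assoc]
        _ = z * (z * y * z * x) * x * z := normal z x (z * y * z * x)
        _ = z * y * (z * x) * z := by simp [mul_assoc, idem, idem']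
        _ = z * (z * x) * y * z := (normal z (z * x) y).symm
        _ = z * (x * (y * z)) := by simp [mul_assoc, idem, idem']
    rw [key x y, key y x]
    have := normal z x y
    simpa [mul_assoc] using this
end
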